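/- Evaluation at points gives a bijection between ℝⁿ and the set of ℝ-algebra homomorphisms C^∞(ℝⁿ, ℝ) → ℝ. Concretely: every ℝ-algebra homomorphism φ : C^∞(ℝⁿ, ℝ) → ℝ is evaluation at a unique point p ∈ ℝⁿ, namely p = (φ(x₁), ..., φ(xₙ)) where xᵢ are the coordinate functions. -/

import Mathlib

open scoped Manifold
noncomputable section
abbrev En (n : ℕ) : Type := EuclideanSpace ℝ (Fin n)
abbrev Cinf (n : ℕ) : Type := C^(⊤ : ℕ∞)⟮𝓘(ℝ, En n), En n; 𝓘(ℝ, ℝ), ℝ⟯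
def mIdeal {n : ℕ} (p : En n) : Ideal (Cinf n) := RingHom.ker (ContMDiffMap.evalRingHom p)
/-- The i-th coordinate function as a smooth function on ℝⁿ. -/
def coordFn {n : ℕ} (i : Fin n) : Cinf n :=
  ⟨fun x => x i, ((EuclideanSpace.proj i : En n →L[ℝ] ℝ).contMDiff : ContMDiff _ _ _ _)⟩

namespace ContMDiffMap

section

variable {𝕜 : Type*} [NontriviallyNormedField 𝕜] {E : Type*} [NormedAddCommGroup E]
  [NormedSpace 𝕜 E] {H : Type*} [TopologicalSpace H] {I : ModelWithCorners 𝕜 E H}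
  {M : Type*} [TopologicalSpace M] [ChartedSpace H M] {k : WithTop ℕ∞}

theorem isUnit_of_forall_ne_zero {g : C^k⟮I, M; 𝓘(𝕜, 𝕜), 𝕜⟯} (hg : ∀ x, g x ≠ 0) : IsUnit g :=
  IsUnit.of_mul_eq_one (⟨fun x => (g x)⁻¹, g.contMDiff.inv₀ hg⟩ : C^k⟮I, M; 𝓘(𝕜, 𝕜), 𝕜⟯)
    (ext fun x => mul_inv_cancel₀ (hg x))

end

variable {E : Type*} [NormedAddCommGroup E] [NormedSpace ℝ E] {H : Type*} [TopologicalSpace H]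
  {I : ModelWithCorners ℝ E H} {M : Type*} [TopologicalSpace M] [ChartedSpace H M]
  {k : WithTop ℕ∞}

/-- Otherwise `∑ j, u j ^ 2` is positive everywhere, hence a unit, yet lies in `ker φ`. -/
theorem exists_common_zero_of_ringHom {R : Type*} [Semiring R] [Nontrivial R]
    (φ : C^k⟮I, M; 𝓘(ℝ, ℝ), ℝ⟯ →+* R) {ι : Type*} [Fintype ι] (u : ι → C^k⟮I, M; 𝓘(ℝ, ℝ), ℝ⟯)
    (hu : ∀ j, φ (u j) = 0) : ∃ x, ∀ j, u j x = 0 := by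
  by_contra! hne
  set g := ∑ j, u j * u j
  have hg_apply (x : M) : g x = ∑ j, u j x * u j x := map_sum (evalRingHom x) _ _
  have hg_pos (x : M) : 0 < g x := by
    obtain ⟨j, hj⟩ := hne x
    rw [hg_apply]
    exact Finset.sum_pos' (fun i _ => mul_self_nonneg _) ⟨j, Finset.mem_univ j, mul_self_pos.2 hj⟩
  have hφg : φ g = 0 := by simp [g, hu]
  exact ((isUnit_of_forall_ne_zero fun x => (hg_pos x).ne').map φ).ne_zero hφg

theorem exists_forall_apply_eq_algHom (φ : C^k⟮I, M; 𝓘(ℝ, ℝ), ℝ⟯ →ₐ[ℝ] ℝ) {ι : Type*} [Fintype ι]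
    (u : ι → C^k⟮I, M; 𝓘(ℝ, ℝ), ℝ⟯) : ∃ x, ∀ j, u j x = φ (u j) := by
  obtain ⟨x, hx⟩ := exists_common_zero_of_ringHom (φ : C^k⟮I, M; 𝓘(ℝ, ℝ), ℝ⟯ →+* ℝ)
    (fun j => u j - algebraMap ℝ _ (φ (u j))) fun j => by simp
  exact ⟨x, fun j => sub_eq_zero.1 (hx j)⟩

end ContMDiffMap

theorem algHom_is_evaluation (n : ℕ) :
    (∀ φ : Cinf n →ₐ[ℝ] ℝ, ∃! p : En n, ∀ f : Cinf n, φ f = f p) ∧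
    (∀ φ : Cinf n →ₐ[ℝ] ℝ, ∀ f : Cinf n,
      φ f = f (WithLp.toLp 2 (fun i => φ (coordFn i)) : En n)) := by
  have eval_eq (φ : Cinf n →ₐ[ℝ] ℝ) (f : Cinf n) :
      φ f = f (WithLp.toLp 2 (fun i => φ (coordFn i))) := by
    obtain ⟨x, hx⟩ := ContMDiffMap.exists_forall_apply_eq_algHom φ
      fun j : Option (Fin n) => j.elim f coordFn
    obtain rfl : x = WithLp.toLp 2 (fun i => φ (coordFn i)) := PiLp.ext fun i => hx (some i)
    exact (hx none).symm
  exact ⟨fun φ => ⟨_, eval_eq φ, fun q hq => PiLp.ext fun i => (hq (coordFn i)).symm⟩, eval_eq⟩
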